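/- arXiv:0904.2889 — 3 statements merged into one kernel-verified Lean document; each statement's English description precedes it below -/
import Mathlib

section
/- Let q be a nonzero complex number that is not a root of unity. Two q-strings S(ℓ,a) and S(ℓ',a') are adjacent (i.e., their union is a q-string strictly longer than both) if and only if a⁻¹a' = q^{±i} for some i in {|ℓ-ℓ'|+2, |ℓ-ℓ'|+4, ..., ℓ+ℓ'}. -/
/-- `q` is not a root of unity. -/
def NotRootOfUnity (q : ℂ) : Prop := ∀ n : ℕ, n ≠ 0 → q ^ n ≠ 1

/-- The `q`-string `S(ℓ,a) = {a q^{2i-ℓ+1} : 0 ≤ i ≤ ℓ-1}` as a finite set. -/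
noncomputable def qString (q a : ℂ) (ℓ : ℕ) : Finset ℂ :=
  (Finset.range ℓ).image (fun i : ℕ => a * q ^ (2 * (i : ℤ) - (ℓ : ℤ) + 1))

/-- Two `q`-strings are adjacent if their union is a strictly longer `q`-string. -/
def Adjacent (q : ℂ) (ℓ : ℕ) (a : ℂ) (ℓ' : ℕ) (a' : ℂ) : Prop :=
  ∃ (ℓ'' : ℕ) (a'' : ℂ), a'' ≠ 0 ∧ ℓ'' > max ℓ ℓ' ∧
    qString q a ℓ ∪ qString q a' ℓ' = qString q a'' ℓ''

lemma zpow_eq_zero' {q : ℂ} (hq : q ≠ 0) (hqru : NotRootOfUnity q) {n : ℤ}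
    (h : q ^ n = 1) : n = 0 := by
  rcases lt_trichotomy n 0 with hn | hn | hn
  · exfalso
    have h2 : q ^ (-n).toNat = 1 := by
      rw [← zpow_natCast, Int.toNat_of_nonneg (by omega), zpow_neg, h, inv_one]
    exact hqru _ (by omega) h2
  · exact hn
  · exfalso
    have h2 : q ^ n.toNat = 1 := by
      rw [← zpow_natCast, Int.toNat_of_nonneg (by omega)]; exact h
    exact hqru _ (by omega) h2

lemma zpow_inj' {q : ℂ} (hq : q ≠ 0) (hqru : NotRootOfUnity q) {m n : ℤ}
    (h : q ^ m = q ^ n) : m = n := by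
  have : q ^ (m - n) = 1 := by rw [zpow_sub₀ hq, h, div_self (zpow_ne_zero _ hq)]
  have := zpow_eq_zero' hq hqru this
  omega

lemma mem_qString_iff {q a : ℂ} (hq : q ≠ 0) (ℓ : ℕ) (s : ℤ) (x : ℂ) :
    x ∈ qString q (a * q ^ s) ℓ ↔
      ∃ t : ℤ, ((t - s + ℓ) % 2 = 1 ∧ s - ℓ + 1 ≤ t ∧ t ≤ s + ℓ - 1) ∧ x = a * q ^ t := by
  simp only [qString, Finset.mem_image, Finset.mem_range]
  constructor
  · rintro ⟨j, hj, rfl⟩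
    refine ⟨s + 2*j - ℓ + 1, ⟨by omega, by omega, by omega⟩, ?_⟩
    rw [mul_assoc, ← zpow_add₀ hq]
    congr 2
    omega
  · rintro ⟨t, ⟨h1, h2, h3⟩, rfl⟩
    refine ⟨((t - s + ℓ - 1) / 2).toNat, by omega, ?_⟩
    rw [mul_assoc, ← zpow_add₀ hq]
    congr 2
    omega

lemma mem_qString_pow {q a : ℂ} (hq : q ≠ 0) (hqru : NotRootOfUnity q) (ha : a ≠ 0)
    (ℓ : ℕ) (s t : ℤ) :
    a * q ^ t ∈ qString q (a * q ^ s) ℓ ↔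
      ((t - s + ℓ) % 2 = 1 ∧ s - ℓ + 1 ≤ t ∧ t ≤ s + ℓ - 1) := by
  rw [mem_qString_iff hq]
  constructor
  · rintro ⟨t', h, he⟩
    have h2 : t = t' := zpow_inj' hq hqru (mul_left_cancel₀ ha he)
    rwa [h2]
  · intro h; exact ⟨t, h, rfl⟩

lemma qString_q0 (q a : ℂ) (ℓ : ℕ) : qString q a ℓ = qString q (a * q ^ (0:ℤ)) ℓ := by
  rw [zpow_zero, mul_one]

lemma qString_card {q a : ℂ} (hq : q ≠ 0) (hqru : NotRootOfUnity q) (ha : a ≠ 0)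
    (ℓ : ℕ) : (qString q a ℓ).card = ℓ := by
  rw [qString, Finset.card_image_of_injOn, Finset.card_range]
  intro i _ j _ hij
  have h2 := zpow_inj' hq hqru (mul_left_cancel₀ ha hij)
  omega

lemma eq_mul_zpow' {q : ℂ} (hq : q ≠ 0) {x y : ℂ} {s t : ℤ} (h : x * q ^ s = y * q ^ t) :
    x = y * q ^ (t - s) := by
  calc x = x * q ^ s * (q ^ s)⁻¹ := by
        rw [mul_assoc, mul_inv_cancel₀ (zpow_ne_zero _ hq), mul_one]
    _ = y * q ^ t * (q ^ s)⁻¹ := by rw [h]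
    _ = y * q ^ (t - s) := by rw [zpow_sub₀ hq, div_eq_mul_inv, mul_assoc]

set_option maxHeartbeats 1000000 in
/-- `S(ℓ,a)` and `S(ℓ',a')` are adjacent iff `a⁻¹ a' = q^{±i}` for some
`i ∈ {|ℓ-ℓ'|+2, |ℓ-ℓ'|+4, …, ℓ+ℓ'}`. -/
theorem qString_adjacent_iff (q : ℂ) (hq : q ≠ 0) (hqru : NotRootOfUnity q)
    (ℓ ℓ' : ℕ) (hℓ : 1 ≤ ℓ) (hℓ' : 1 ≤ ℓ') (a a' : ℂ) (ha : a ≠ 0) (ha' : a' ≠ 0) :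
    Adjacent q ℓ a ℓ' a' ↔
      ∃ i : ℕ, ((ℓ : ℤ) - (ℓ' : ℤ)).natAbs + 2 ≤ i ∧ i ≤ ℓ + ℓ' ∧
        (i : ℤ) % 2 = ((ℓ : ℤ) + (ℓ' : ℤ)) % 2 ∧
        (a⁻¹ * a' = q ^ (i : ℤ) ∨ a⁻¹ * a' = q ^ (-(i : ℤ))) := by
  constructor
  · rintro ⟨ℓ'', a'', ha'', hgt, hunion⟩
    have hgt' := max_lt_iff.mp hgt
    -- a * q^(ℓ-1) lies in the big string
    have hxA : a * q ^ ((ℓ:ℤ) - 1) ∈ qString q a ℓ := by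
      rw [qString_q0, mem_qString_pow hq hqru ha]
      refine ⟨by omega, by omega, by omega⟩
    have hxC : a * q ^ ((ℓ:ℤ) - 1) ∈ qString q a'' ℓ'' := by
      rw [← hunion]; exact Finset.mem_union_left _ hxA
    rw [qString_q0, mem_qString_iff hq] at hxC
    obtain ⟨c, ha''eq⟩ : ∃ c : ℤ, a'' = a * q ^ c := by
      obtain ⟨e, _, he2⟩ := hxC
      exact ⟨_, eq_mul_zpow' hq he2.symm⟩
    -- a' * q^(ℓ'-1) lies in the big string
    have hyB : a' * q ^ ((ℓ':ℤ) - 1) ∈ qString q a' ℓ' := by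
      rw [qString_q0, mem_qString_pow hq hqru ha']
      refine ⟨by omega, by omega, by omega⟩
    have hyC : a' * q ^ ((ℓ':ℤ) - 1) ∈ qString q a'' ℓ'' := by
      rw [← hunion]; exact Finset.mem_union_right _ hyB
    rw [ha''eq, mem_qString_iff hq] at hyC
    obtain ⟨d, ha'eq⟩ : ∃ d : ℤ, a' = a * q ^ d := by
      obtain ⟨f, _, hf2⟩ := hyC
      exact ⟨_, eq_mul_zpow' hq hf2⟩
    clear hxA hxC hyB hyC
    -- membership transfer
    have key : ∀ t : ℤ,
        (((t + ℓ) % 2 = 1 ∧ 1 - (ℓ:ℤ) ≤ t ∧ t ≤ (ℓ:ℤ) - 1) ∨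
         ((t - d + ℓ') % 2 = 1 ∧ d - ℓ' + 1 ≤ t ∧ t ≤ d + ℓ' - 1)) ↔
        ((t - c + ℓ'') % 2 = 1 ∧ c - ℓ'' + 1 ≤ t ∧ t ≤ c + ℓ'' - 1) := by
      intro t
      have h := Finset.ext_iff.mp hunion (a * q ^ t)
      rw [Finset.mem_union] at h
      rw [qString_q0 q a, ha'eq, ha''eq, mem_qString_pow hq hqru ha,
        mem_qString_pow hq hqru ha, mem_qString_pow hq hqru ha] at h
      constructor
      · intro hc'
        rw [← h]
        rcases hc' with h' | h'
        · exact Or.inl ⟨by omega, by omega, by omega⟩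
        · exact Or.inr ⟨by omega, by omega, by omega⟩
      · intro hc'
        have h2 := h.mpr ⟨by omega, by omega, by omega⟩
        rcases h2 with h' | h'
        · exact Or.inl ⟨by omega, by omega, by omega⟩
        · exact Or.inr ⟨by omega, by omega, by omega⟩
    have c1 := (key ((ℓ:ℤ) - 1)).mp (Or.inl ⟨by omega, by omega, by omega⟩)
    have c2 := (key (1 - (ℓ:ℤ))).mp (Or.inl ⟨by omega, by omega, by omega⟩)
    have c3 := (key (d + (ℓ':ℤ) - 1)).mp (Or.inr ⟨by omega, by omega, by omega⟩)
    have c4 := (key (d - (ℓ':ℤ) + 1)).mp (Or.inr ⟨by omega, by omega, by omega⟩)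
    have c5 := (key (c + (ℓ'':ℤ) - 1)).mpr ⟨by omega, by omega, by omega⟩
    have c6 := (key (c - (ℓ'':ℤ) + 1)).mpr ⟨by omega, by omega, by omega⟩
    have hcard : ℓ'' ≤ ℓ + ℓ' := by
      have hc2 := Finset.card_union_le (qString q a ℓ) (qString q a' ℓ')
      rw [hunion, qString_card hq hqru ha, qString_card hq hqru ha',
        qString_card hq hqru ha''] at hc2
      exact hc2
    clear key hunion hgt
    have hpar : d % 2 = ((ℓ:ℤ) + (ℓ':ℤ)) % 2 := by
      clear c2 c4 c5 c6 hcard hgt'; omega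
    have hup : d.natAbs ≤ ℓ + ℓ' := by
      clear c5 c6 hgt' hpar; omega
    have hlow : ((ℓ:ℤ) - (ℓ':ℤ)).natAbs + 2 ≤ d.natAbs := by
      clear c1 c2 c3 c4 hcard hup hpar
      rcases c5 with c5 | c5 <;> rcases c6 with c6 | c6 <;> omega
    clear c1 c2 c3 c4 c5 c6 hcard hgt'
    refine ⟨d.natAbs, by omega, by omega, by omega, ?_⟩
    have haa' : a⁻¹ * a' = q ^ d := by
      rw [ha'eq, ← mul_assoc, inv_mul_cancel₀ ha, one_mul]
    rcases le_or_gt 0 d with hd0 | hd0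
    · left; rw [haa']; congr 1; omega
    · right; rw [haa']; congr 1; omega
  · rintro ⟨i, hi1, hi2, hi3, hd⟩
    have hdd : ∃ d : ℤ, a' = a * q ^ d ∧ (d = (i:ℤ) ∨ d = -(i:ℤ)) := by
      rcases hd with h | h
      · exact ⟨(i:ℤ), by rw [← h, ← mul_assoc, mul_inv_cancel₀ ha, one_mul], Or.inl rfl⟩
      · exact ⟨-(i:ℤ), by rw [← h, ← mul_assoc, mul_inv_cancel₀ ha, one_mul], Or.inr rfl⟩
    obtain ⟨d, ha'eq, hdi⟩ := hdd
    set lo : ℤ := min (1 - (ℓ:ℤ)) (d - ℓ' + 1) with hlo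
    set hi : ℤ := max ((ℓ:ℤ) - 1) (d + ℓ' - 1) with hhi
    set c : ℤ := (lo + hi) / 2 with hc
    refine ⟨((hi - lo) / 2 + 1).toNat, a * q ^ c,
      mul_ne_zero ha (zpow_ne_zero _ hq), ?_, ?_⟩
    · rw [gt_iff_lt, max_lt_iff]
      constructor <;> omega
    · ext x
      rw [Finset.mem_union, qString_q0 q a, ha'eq, mem_qString_iff hq,
        mem_qString_iff hq, mem_qString_iff hq]
      constructor
      · rintro (⟨t, ht, rfl⟩ | ⟨t, ht, rfl⟩) <;> exact ⟨t, by omega, rfl⟩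
      · rintro ⟨t, ht, rfl⟩
        rcases (show (((t - 0 + ℓ) % 2 = 1 ∧ 0 - (ℓ:ℤ) + 1 ≤ t ∧ t ≤ 0 + (ℓ:ℤ) - 1) ∨
            ((t - d + ℓ') % 2 = 1 ∧ d - ℓ' + 1 ≤ t ∧ t ≤ d + ℓ' - 1)) by omega) with h | h
        · exact Or.inl ⟨t, h, rfl⟩
        · exact Or.inr ⟨t, h, rfl⟩
end

section
/- Let q be a nonzero complex number that is not a root of unity, and let Ω be a finite multiset of nonzero complex numbers. Then there exists a multiset {S(ℓ_i,a_i)}_{i=1}^n of q-strings in general position (pairwise non-adjacent) such that Ω = ⋃_{i=1}^n S(ℓ_i,a_i) as multisets, and this multiset of q-strings is uniquely determined by Ω. -/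
/-- The `q`-string `S(ℓ,a)` as a multiset (here represented by a pair `p = (ℓ,a)`). -/
noncomputable def qStringM (q : ℂ) (p : ℕ × ℂ) : Multiset ℂ :=
  (Multiset.range p.1).map (fun i : ℕ => p.2 * q ^ (2 * (i : ℤ) - (p.1 : ℤ) + 1))

/-- Two `q`-strings (as pairs `(ℓ,a)`) are in general position if they are not adjacent. -/
def GenPos (q : ℂ) (p p' : ℕ × ℂ) : Prop := ¬ Adjacent q p.1 p.2 p'.1 p'.2

/-!
Since `q` is not a root of unity, `k ↦ c * q ^ (2 * k)` is injective on `ℤ`, so a `q`-string is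
an integer interval `[d, d + ℓ)` of one such orbit (`qBase` is its lowest point), and two strings
whose intervals overlap or touch are in general position only if one interval contains the other.

Existence: split off a longest string contained in `Ω`; a string of the rest adjacent to it would
glue with it into a longer string contained in `Ω`. Uniqueness: a longest string `S` occurring in
either decomposition lies in `Ω`, and walking up `S` point by point, general position forces each
string of the other decomposition covering the next point to contain the previous covering string.
The last one contains `S` and is not longer, so it is `S`; remove `S` from both and induct.
-/

namespace Multiset

theorem pairwise_cons_iff {α : Type*} {r : α → α → Prop} [Std.Symm r] {a : α} {s : Multiset α} :
    (a ::ₘ s).Pairwise r ↔ (∀ b ∈ s, r a b) ∧ s.Pairwise r := by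
  conv_lhs => rw [← s.coe_toList, cons_coe]
  rw [pairwise_coe_iff_pairwise, List.pairwise_cons, ← pairwise_coe_iff_pairwise, coe_toList]
  simp only [mem_toList]

end Multiset

namespace QString

variable {q : ℂ}

theorem zpow_injective (hq : q ≠ 0) (hqru : NotRootOfUnity q) :
    Function.Injective fun n : ℤ => q ^ n := by
  have hinf : ¬IsOfFinOrder (Units.mk0 q hq) := by
    rw [isOfFinOrder_iff_pow_eq_one]
    rintro ⟨n, hn, h⟩
    exact hqru n hn.ne' (by simpa [Units.ext_iff] using h)
  intro m n h
  exact injective_zpow_iff_not_isOfFinOrder.mpr hinf (Units.ext (by simpa using h))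

theorem orbit_injective (hq : q ≠ 0) (hqru : NotRootOfUnity q) {c : ℂ} (hc : c ≠ 0) :
    Function.Injective fun k : ℤ => c * q ^ (2 * k) := fun m n h => by
  have := zpow_injective hq hqru (mul_left_cancel₀ hc h)
  omega

instance : Std.Symm (GenPos q) where
  symm _ _ h := fun ⟨ℓ'', a'', ha'', hlong, hunion⟩ =>
    h ⟨ℓ'', a'', ha'', by rwa [max_comm], by rwa [Finset.union_comm]⟩

noncomputable def qBase (q : ℂ) (p : ℕ × ℂ) : ℂ := p.2 * q ^ (1 - (p.1 : ℤ))

theorem qBase_ne_zero (hq : q ≠ 0) {p : ℕ × ℂ} (hp : p.2 ≠ 0) : qBase q p ≠ 0 :=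
  mul_ne_zero hp (zpow_ne_zero _ hq)

theorem qString_eq_toFinset (p : ℕ × ℂ) : qString q p.2 p.1 = (qStringM q p).toFinset := rfl

theorem qString_eq_image_Ico (hq : q ≠ 0) {p : ℕ × ℂ} {c : ℂ} {d : ℤ}
    (hd : qBase q p = c * q ^ (2 * d)) :
    qString q p.2 p.1 = (Finset.Ico d (d + p.1)).image fun k : ℤ => c * q ^ (2 * k) := by
  ext x
  simp only [qString, Finset.mem_image, Finset.mem_range, Finset.mem_Ico]
  have hpt : ∀ i : ℤ, p.2 * q ^ (2 * i - p.1 + 1) = c * q ^ (2 * (d + i)) := fun i => by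
    rw [show 2 * i - p.1 + 1 = (1 - p.1) + 2 * i by ring, zpow_add₀ hq, ← mul_assoc,
      show p.2 * q ^ (1 - (p.1 : ℤ)) = qBase q p from rfl, hd, mul_assoc, ← zpow_add₀ hq, mul_add]
  constructor
  · rintro ⟨i, hi, rfl⟩
    exact ⟨d + i, ⟨by omega, by omega⟩, (hpt i).symm⟩
  · rintro ⟨k, ⟨hk₁, hk₂⟩, rfl⟩
    refine ⟨(k - d).toNat, by omega, ?_⟩
    rw [hpt, Int.toNat_of_nonneg (by omega), add_sub_cancel]

theorem mem_qStringM_iff_of_offset (hq : q ≠ 0) (hqru : NotRootOfUnity q) {p : ℕ × ℂ} {c : ℂ}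
    (hc : c ≠ 0) {d k : ℤ} (hd : qBase q p = c * q ^ (2 * d)) :
    c * q ^ (2 * k) ∈ qStringM q p ↔ d ≤ k ∧ k < d + p.1 := by
  rw [← Multiset.mem_toFinset, ← qString_eq_toFinset, qString_eq_image_Ico hq hd,
    (orbit_injective hq hqru hc).mem_finset_image, Finset.mem_Ico]

theorem exists_offset_of_mem (hq : q ≠ 0) {p : ℕ × ℂ} {c : ℂ} {k : ℤ}
    (hk : c * q ^ (2 * k) ∈ qStringM q p) : ∃ d : ℤ, qBase q p = c * q ^ (2 * d) := by
  rw [← Multiset.mem_toFinset, ← qString_eq_toFinset,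
    qString_eq_image_Ico hq (d := 0) (by rw [mul_zero, zpow_zero, mul_one]), Finset.mem_image] at hk
  obtain ⟨j, -, hj⟩ := hk
  refine ⟨k - j, ?_⟩
  rw [mul_sub, zpow_sub₀ hq, ← mul_div_assoc, ← hj, mul_div_cancel_right₀ _ (zpow_ne_zero _ hq)]

theorem qBase_mk_zpow (hq : q ≠ 0) (c : ℂ) (m : ℤ) (ℓ : ℕ) :
    qBase q (ℓ, c * q ^ (2 * m) * q ^ ((ℓ : ℤ) - 1)) = c * q ^ (2 * m) := by
  rw [qBase, mul_assoc, ← zpow_add₀ hq, sub_add_sub_cancel', sub_self, zpow_zero, mul_one]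

theorem nested_of_genPos (hq : q ≠ 0) {p p' : ℕ × ℂ} (hp : p.2 ≠ 0) {c : ℂ} {d d' : ℤ}
    (hd : qBase q p = c * q ^ (2 * d)) (hd' : qBase q p' = c * q ^ (2 * d'))
    (hd'p : d' ≤ d + p.1) (hdp' : d ≤ d' + p'.1) (hgp : GenPos q p p') :
    (d ≤ d' ∧ d' + p'.1 ≤ d + p.1) ∨ (d' ≤ d ∧ d + p.1 ≤ d' + p'.1) := by
  by_contra hnest
  have hc : c ≠ 0 := left_ne_zero_of_mul (hd ▸ qBase_ne_zero hq hp)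
  set m := min d d'
  set ℓ := (max (d + p.1) (d' + p'.1) - m).toNat
  have hℓ : m + ℓ = max (d + p.1) (d' + p'.1) := by omega
  refine hgp ⟨ℓ, c * q ^ (2 * m) * q ^ ((ℓ : ℤ) - 1),
    mul_ne_zero (mul_ne_zero hc (zpow_ne_zero _ hq)) (zpow_ne_zero _ hq), by omega, ?_⟩
  rw [qString_eq_image_Ico hq hd, qString_eq_image_Ico hq hd',
    qString_eq_image_Ico hq (qBase_mk_zpow hq c m ℓ), ← Finset.image_union,
    Finset.Ico_union_Ico' hd'p hdp', hℓ]

theorem exists_offset_of_mem_sum (hq : q ≠ 0) (hqru : NotRootOfUnity q) {L : Multiset (ℕ × ℂ)}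
    {c : ℂ} (hc : c ≠ 0) {k : ℤ} (hk : c * q ^ (2 * k) ∈ (L.map (qStringM q)).sum) :
    ∃ p ∈ L, ∃ d : ℤ, qBase q p = c * q ^ (2 * d) ∧ d ≤ k ∧ k < d + p.1 := by
  obtain ⟨p, hpL, hkp⟩ := Multiset.mem_bind.mp hk
  obtain ⟨d, hd⟩ := exists_offset_of_mem hq hkp
  exact ⟨p, hpL, d, hd, (mem_qStringM_iff_of_offset hq hqru hc hd).mp hkp⟩

theorem nodup_qStringM (hq : q ≠ 0) (hqru : NotRootOfUnity q) {p : ℕ × ℂ} (hp : p.2 ≠ 0) :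
    (qStringM q p).Nodup := by
  refine (Multiset.nodup_range p.1).map fun i j hij => ?_
  have := zpow_injective hq hqru (mul_left_cancel₀ hp hij)
  omega

theorem card_qStringM (p : ℕ × ℂ) : Multiset.card (qStringM q p) = p.1 := by
  simp [qStringM]

theorem genPos_of_longest (hq : q ≠ 0) (hqru : NotRootOfUnity q) {Ω : Multiset ℂ}
    {p p' : ℕ × ℂ} (hp : qStringM q p ≤ Ω) (hp' : qStringM q p' ≤ Ω)
    (hlongest : ∀ r : ℕ × ℂ, r.2 ≠ 0 → qStringM q r ≤ Ω → r.1 ≤ p.1) : GenPos q p p' := by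
  rintro ⟨ℓ, a, ha, hlong, hunion⟩
  have hle : qStringM q (ℓ, a) ≤ Ω := by
    rw [Multiset.le_iff_subset (nodup_qStringM hq hqru ha)]
    intro x hx
    have hx' : x ∈ qString q p.2 p.1 ∪ qString q p'.2 p'.1 :=
      hunion ▸ Multiset.mem_toFinset.mpr hx
    rcases Finset.mem_union.mp hx' with h | h
    · exact Multiset.mem_of_le hp (Multiset.mem_toFinset.mp h)
    · exact Multiset.mem_of_le hp' (Multiset.mem_toFinset.mp h)
  have := hlongest (ℓ, a) ha hle
  omega

theorem exists_longest_qStringM_le {Ω : Multiset ℂ} (hΩ : Ω ≠ 0) (h0 : (0 : ℂ) ∉ Ω) :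
    ∃ p : ℕ × ℂ, 1 ≤ p.1 ∧ p.2 ≠ 0 ∧ qStringM q p ≤ Ω ∧
      ∀ r : ℕ × ℂ, r.2 ≠ 0 → qStringM q r ≤ Ω → r.1 ≤ p.1 := by
  classical
  let Fits (ℓ : ℕ) : Prop := ∃ a : ℂ, a ≠ 0 ∧ qStringM q (ℓ, a) ≤ Ω
  have hbound {ℓ : ℕ} (h : Fits ℓ) : ℓ ≤ Multiset.card Ω := by
    obtain ⟨a, -, hle⟩ := h
    simpa [card_qStringM] using Multiset.card_le_card hle
  obtain ⟨x, hx⟩ := Multiset.exists_mem_of_ne_zero hΩ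
  have hfits₁ : Fits 1 := ⟨x, ne_of_mem_of_not_mem hx h0, by simpa [qStringM] using hx⟩
  obtain ⟨a, ha, hle⟩ := Nat.findGreatest_spec (hbound hfits₁) hfits₁
  refine ⟨(_, a), Nat.le_findGreatest (hbound hfits₁) hfits₁, ha, hle, fun r hr hrle => ?_⟩
  exact Nat.le_findGreatest (hbound ⟨r.2, hr, hrle⟩) ⟨r.2, hr, hrle⟩

def IsGenPosDecomposition (q : ℂ) (Ω : Multiset ℂ) (L : Multiset (ℕ × ℂ)) : Prop :=
  (∀ p ∈ L, 1 ≤ p.1 ∧ p.2 ≠ 0) ∧ L.Pairwise (GenPos q) ∧ Ω = (L.map (qStringM q)).sum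

namespace IsGenPosDecomposition

variable {Ω : Multiset ℂ} {L : Multiset (ℕ × ℂ)} {c : ℂ}

theorem qStringM_le (hΩ : IsGenPosDecomposition q Ω L) {p : ℕ × ℂ} (hp : p ∈ L) :
    qStringM q p ≤ Ω :=
  hΩ.2.2 ▸ Multiset.le_sum_of_mem (Multiset.mem_map_of_mem _ hp)

theorem erase (hΩ : IsGenPosDecomposition q Ω L) {p : ℕ × ℂ} (hp : p ∈ L) :
    IsGenPosDecomposition q (Ω - qStringM q p) (L.erase p) := by
  obtain ⟨hval, hpair, hsum⟩ := hΩ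
  rw [← Multiset.cons_erase hp] at hval hpair hsum
  rw [Multiset.forall_mem_cons] at hval
  rw [Multiset.pairwise_cons_iff] at hpair
  rw [Multiset.map_cons, Multiset.sum_cons] at hsum
  exact ⟨hval.2, hpair.2, by rw [hsum, add_tsub_cancel_left]⟩

theorem exists_cover_succ (hq : q ≠ 0) (hqru : NotRootOfUnity q)
    (hΩ : IsGenPosDecomposition q Ω L) (hc : c ≠ 0) {k : ℤ} (hk : c * q ^ (2 * k) ∈ Ω)
    {p : ℕ × ℂ} (hp : p ∈ L) {d : ℤ} (hd : qBase q p = c * q ^ (2 * d)) (hd0 : d ≤ 0)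
    (hdk : k ≤ d + p.1) :
    ∃ p' ∈ L, ∃ d' : ℤ, qBase q p' = c * q ^ (2 * d') ∧ d' ≤ 0 ∧ k < d' + p'.1 := by
  -- If `p` ends just below `k`, a string `p'` through `k` touches `p`, so it must contain `p`.
  rcases hdk.lt_or_eq with hlt | hend
  · exact ⟨p, hp, d, hd, hd0, hlt⟩
  obtain ⟨p', hp', d', hd', hd'k, hkd'⟩ := exists_offset_of_mem_sum hq hqru hc (hΩ.2.2 ▸ hk)
  have hne : p ≠ p' := by
    rintro rfl
    have := orbit_injective hq hqru hc (hd.symm.trans hd')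
    omega
  rcases nested_of_genPos hq (hΩ.1 p hp).2 hd hd' (by omega) (by omega)
    (hΩ.2.1.forall hp hp' hne) with h | h
  · omega
  · exact ⟨p', hp', d', hd', by omega, hkd'⟩

theorem exists_cover (hq : q ≠ 0) (hqru : NotRootOfUnity q) (hΩ : IsGenPosDecomposition q Ω L)
    (hc : c ≠ 0) {ℓ : ℕ} (hpts : ∀ k : ℕ, k < ℓ → c * q ^ (2 * (k : ℤ)) ∈ Ω) :
    ∀ n : ℕ, n < ℓ → ∃ p ∈ L, ∃ d : ℤ, qBase q p = c * q ^ (2 * d) ∧ d ≤ 0 ∧ n < d + p.1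
  | 0, h0 => by
    obtain ⟨p, hp, d, hd, hd0, h0d⟩ :=
      exists_offset_of_mem_sum hq hqru hc (hΩ.2.2 ▸ hpts 0 h0)
    exact ⟨p, hp, d, hd, hd0, h0d⟩
  | n + 1, hn => by
    obtain ⟨p, hp, d, hd, hd0, hnd⟩ := exists_cover hq hqru hΩ hc hpts n (by omega)
    exact_mod_cast hΩ.exists_cover_succ hq hqru hc (hpts (n + 1) hn) hp hd hd0
      (by push_cast; omega)

theorem mem_of_longest (hq : q ≠ 0) (hqru : NotRootOfUnity q) (hΩ : IsGenPosDecomposition q Ω L)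
    {p : ℕ × ℂ} (hp : 1 ≤ p.1 ∧ p.2 ≠ 0) (hle : qStringM q p ≤ Ω)
    (hlongest : ∀ p' ∈ L, p'.1 ≤ p.1) : p ∈ L := by
  have hc := qBase_ne_zero hq hp.2
  have hbase : qBase q p = qBase q p * q ^ (2 * (0 : ℤ)) := by simp
  have hpts (k : ℕ) (hk : k < p.1) : qBase q p * q ^ (2 * (k : ℤ)) ∈ Ω :=
    Multiset.mem_of_le hle ((mem_qStringM_iff_of_offset hq hqru hc hbase).mpr (by omega))
  obtain ⟨p', hp', d, hd, hd0, hlt⟩ := hΩ.exists_cover hq hqru hc hpts (p.1 - 1) (by omega)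
  have hp'_le := hlongest p' hp'
  obtain ⟨hlen, rfl⟩ : p'.1 = p.1 ∧ d = 0 := by omega
  rw [← hbase, qBase, qBase, hlen] at hd
  rwa [← Prod.ext hlen (mul_right_cancel₀ (zpow_ne_zero _ hq) hd)]

theorem unique (hq : q ≠ 0) (hqru : NotRootOfUnity q) {L' : Multiset (ℕ × ℂ)}
    (hΩ : IsGenPosDecomposition q Ω L) (hΩ' : IsGenPosDecomposition q Ω L') : L = L' := by
  induction L using Multiset.strongInductionOn generalizing Ω L' with
  | ih L ih =>
  rcases eq_or_ne (L + L') 0 with h0 | h0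
  · obtain ⟨rfl, rfl⟩ := add_eq_zero.mp h0
    rfl
  obtain ⟨p, hp, hlongest⟩ := Multiset.exists_max_image Prod.fst h0
  have hlongestL (p' : ℕ × ℂ) (h : p' ∈ L) := hlongest p' (Multiset.mem_add.mpr (.inl h))
  have hlongestL' (p' : ℕ × ℂ) (h : p' ∈ L') := hlongest p' (Multiset.mem_add.mpr (.inr h))
  obtain ⟨hpv, hle⟩ : (1 ≤ p.1 ∧ p.2 ≠ 0) ∧ qStringM q p ≤ Ω := by
    rcases Multiset.mem_add.mp hp with hp | hp
    exacts [⟨hΩ.1 p hp, hΩ.qStringM_le hp⟩, ⟨hΩ'.1 p hp, hΩ'.qStringM_le hp⟩]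
  have hpL := hΩ.mem_of_longest hq hqru hpv hle hlongestL
  have hpL' := hΩ'.mem_of_longest hq hqru hpv hle hlongestL'
  rw [← Multiset.cons_erase hpL, ← Multiset.cons_erase hpL',
    ih _ (Multiset.erase_lt.mpr hpL) (hΩ.erase hpL) (hΩ'.erase hpL')]

end IsGenPosDecomposition

theorem exists_isGenPosDecomposition (hq : q ≠ 0) (hqru : NotRootOfUnity q) (Ω : Multiset ℂ)
    (h0 : (0 : ℂ) ∉ Ω) : ∃ L, IsGenPosDecomposition q Ω L := by
  induction Ω using Multiset.strongInductionOn with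
  | ih Ω ih =>
  rcases eq_or_ne Ω 0 with rfl | hΩ
  · exact ⟨0, by simp, Multiset.pairwise_zero _, by simp⟩
  obtain ⟨p, hp₁, hp₂, hle, hlongest⟩ := exists_longest_qStringM_le (q := q) hΩ h0
  have hpos : 0 < qStringM q p :=
    pos_iff_ne_zero.mpr (Multiset.card_pos.mp (card_qStringM (q := q) p ▸ hp₁))
  have hlt : Ω - qStringM q p < Ω := by
    conv_rhs => rw [← add_tsub_cancel_of_le hle]
    exact lt_add_of_pos_left _ hpos
  obtain ⟨L, hL⟩ := ih _ hlt fun h => h0 (Multiset.mem_of_le (Multiset.sub_le_self _ _) h)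
  refine ⟨p ::ₘ L, Multiset.forall_mem_cons.mpr ⟨⟨hp₁, hp₂⟩, hL.1⟩,
    Multiset.pairwise_cons_iff.mpr ⟨fun p' hp' => ?_, hL.2.1⟩, ?_⟩
  · exact genPos_of_longest hq hqru hle ((hL.qStringM_le hp').trans (Multiset.sub_le_self _ _))
      hlongest
  · rw [Multiset.map_cons, Multiset.sum_cons, ← hL.2.2, add_tsub_cancel_of_le hle]

end QString

/-- every finite multiset of nonzero complex numbers decomposes uniquely
as a union of a multiset of `q`-strings in general position. -/
theorem exists_unique_qString_decomposition (q : ℂ) (hq : q ≠ 0) (hqru : NotRootOfUnity q)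
    (Ω : Multiset ℂ) (hΩ : (0 : ℂ) ∉ Ω) :
    ∃! L : Multiset (ℕ × ℂ),
      (∀ p ∈ L, 1 ≤ p.1 ∧ p.2 ≠ 0) ∧
      L.Pairwise (GenPos q) ∧
      Ω = (L.map (qStringM q)).sum := by
  obtain ⟨L, hL⟩ := QString.exists_isGenPosDecomposition hq hqru Ω hΩ
  exact ⟨L, hL, fun L' hL' => QString.IsGenPosDecomposition.unique hq hqru hL' hL⟩
end

section
/- Let V(ℓ,a) be the evaluation module of the quantum loop algebra L = U_q(L(sl₂)) with standard basis v₀,…,v_ℓ, and let τ be the anti-automorphism of L with τ(e_i^+) = e_i^- k_i, τ(e_i^- k_i) = e_i^+, τ(k_i^{±1}) = k_i^{±1}. Then the dual module Hom(V(ℓ,a), ℂ), with L-action (Xf)(v) = f(τ(X)v), is isomorphic to V(ℓ, a⁻¹) as an L-module. Explicitly, if f₀,…,f_ℓ is the dual basis and g_i = q^{−i(ℓ−i+1)}·binom_q(ℓ,i)·f_i (q-binomial coefficient), then g₀,…,g_ℓ is a standard basis of an evaluation module with parameter a⁻¹. -/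
open scoped TensorProduct

noncomputable section

/-- The `q`-integer `[n] = (qⁿ − q⁻ⁿ)/(q − q⁻¹)`. -/
def qnum (q : ℂ) (n : ℕ) : ℂ := (q ^ n - (q⁻¹) ^ n) / (q - q⁻¹)

/-- Data of an action of the generators of `U_q(L(sl₂))` on a ℂ-vector space. -/
structure LModule where
  V : Type
  [acg : AddCommGroup V]
  [mod : Module ℂ V]
  e0p : Module.End ℂ V
  e0m : Module.End ℂ V
  e1p : Module.End ℂ V
  e1m : Module.End ℂ V
  k0 : Module.End ℂ V
  k1 : Module.End ℂ V

attribute [instance] LModule.acg LModule.mod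

/-- The operator data is an honest representation of `U_q(L(sl₂))`:
the defining relations hold. -/
structure LModule.IsRep (q : ℂ) (M : LModule) : Prop where
  k01 : M.k0 * M.k1 = 1
  k10 : M.k1 * M.k0 = 1
  k0e0p : M.k0 * M.e0p = q ^ 2 • (M.e0p * M.k0)
  k0e0m : M.k0 * M.e0m = (q⁻¹) ^ 2 • (M.e0m * M.k0)
  k0e1p : M.k0 * M.e1p = (q⁻¹) ^ 2 • (M.e1p * M.k0)
  k0e1m : M.k0 * M.e1m = q ^ 2 • (M.e1m * M.k0)
  k1e1p : M.k1 * M.e1p = q ^ 2 • (M.e1p * M.k1)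
  k1e1m : M.k1 * M.e1m = (q⁻¹) ^ 2 • (M.e1m * M.k1)
  k1e0p : M.k1 * M.e0p = (q⁻¹) ^ 2 • (M.e0p * M.k1)
  k1e0m : M.k1 * M.e0m = q ^ 2 • (M.e0m * M.k1)
  comm0 : M.e0p * M.e0m - M.e0m * M.e0p = (q - q⁻¹)⁻¹ • (M.k0 - M.k1)
  comm1 : M.e1p * M.e1m - M.e1m * M.e1p = (q - q⁻¹)⁻¹ • (M.k1 - M.k0)
  mixed01 : M.e0p * M.e1m = M.e1m * M.e0p
  mixed10 : M.e1p * M.e0m = M.e0m * M.e1p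
  serre_p01 : M.e0p * (M.e0p ^ 2 * M.e1p - (q ^ 2 + (q⁻¹) ^ 2) • (M.e0p * M.e1p * M.e0p) +
      M.e1p * M.e0p ^ 2) = (M.e0p ^ 2 * M.e1p - (q ^ 2 + (q⁻¹) ^ 2) •
      (M.e0p * M.e1p * M.e0p) + M.e1p * M.e0p ^ 2) * M.e0p
  serre_p10 : M.e1p * (M.e1p ^ 2 * M.e0p - (q ^ 2 + (q⁻¹) ^ 2) • (M.e1p * M.e0p * M.e1p) +
      M.e0p * M.e1p ^ 2) = (M.e1p ^ 2 * M.e0p - (q ^ 2 + (q⁻¹) ^ 2) •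
      (M.e1p * M.e0p * M.e1p) + M.e0p * M.e1p ^ 2) * M.e1p
  serre_m01 : M.e0m * (M.e0m ^ 2 * M.e1m - (q ^ 2 + (q⁻¹) ^ 2) • (M.e0m * M.e1m * M.e0m) +
      M.e1m * M.e0m ^ 2) = (M.e0m ^ 2 * M.e1m - (q ^ 2 + (q⁻¹) ^ 2) •
      (M.e0m * M.e1m * M.e0m) + M.e1m * M.e0m ^ 2) * M.e0m
  serre_m10 : M.e1m * (M.e1m ^ 2 * M.e0m - (q ^ 2 + (q⁻¹) ^ 2) • (M.e1m * M.e0m * M.e1m) +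
      M.e0m * M.e1m ^ 2) = (M.e1m ^ 2 * M.e0m - (q ^ 2 + (q⁻¹) ^ 2) •
      (M.e1m * M.e0m * M.e1m) + M.e0m * M.e1m ^ 2) * M.e1m

/-- The evaluation module `V(ℓ,a)` (with the convention that `a = 0` gives the
`L'`-module `V(ℓ)` on which `e₀⁻` acts as `0`, since `0⁻¹ = 0` in Lean). -/
def evalModule (q : ℂ) (ℓ : ℕ) (a : ℂ) : LModule where
  V := Fin (ℓ + 1) → ℂ
  e0p := Matrix.toLin'
    (Matrix.of fun i j : Fin (ℓ + 1) => if (i : ℕ) = (j : ℕ) + 1 then a * q * qnum q i else 0)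
  e0m := Matrix.toLin'
    (Matrix.of fun i j : Fin (ℓ + 1) =>
      if (j : ℕ) = (i : ℕ) + 1 then a⁻¹ * q⁻¹ * qnum q (ℓ - (i : ℕ)) else 0)
  e1p := Matrix.toLin'
    (Matrix.of fun i j : Fin (ℓ + 1) =>
      if (j : ℕ) = (i : ℕ) + 1 then qnum q (ℓ - (i : ℕ)) else 0)
  e1m := Matrix.toLin'
    (Matrix.of fun i j : Fin (ℓ + 1) => if (i : ℕ) = (j : ℕ) + 1 then qnum q i else 0)
  k0 := Matrix.toLin'
    (Matrix.diagonal fun i : Fin (ℓ + 1) => q ^ (2 * ((i : ℕ) : ℤ) - (ℓ : ℤ)))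
  k1 := Matrix.toLin'
    (Matrix.diagonal fun i : Fin (ℓ + 1) => q ^ ((ℓ : ℤ) - 2 * ((i : ℕ) : ℤ)))

/-- The tensor product of two modules, with the generator actions given by the
coproduct `Δ(k_i^{±1}) = k_i^{±1} ⊗ k_i^{±1}`, `Δ(e_i⁺) = k_i ⊗ e_i⁺ + e_i⁺ ⊗ 1`,
`Δ(e_i⁻k_i) = k_i ⊗ e_i⁻k_i + e_i⁻k_i ⊗ 1`. -/
def LModule.tensor (M N : LModule) : LModule where
  V := M.V ⊗[ℂ] N.V
  e0p := TensorProduct.map M.k0 N.e0p + TensorProduct.map M.e0p (1 : Module.End ℂ N.V)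
  e0m := TensorProduct.map (1 : Module.End ℂ M.V) N.e0m + TensorProduct.map (M.e0m * M.k0) N.k1
  e1p := TensorProduct.map M.k1 N.e1p + TensorProduct.map M.e1p (1 : Module.End ℂ N.V)
  e1m := TensorProduct.map (1 : Module.End ℂ M.V) N.e1m + TensorProduct.map (M.e1m * M.k1) N.k0
  k0 := TensorProduct.map M.k0 N.k0
  k1 := TensorProduct.map M.k1 N.k1

/-- The tensor product `V(ℓ₁,a₁) ⊗ ⋯ ⊗ V(ℓ_n,a_n)` of evaluation modules. -/
def tensorList (q : ℂ) : ℕ × ℂ → List (ℕ × ℂ) → LModule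
  | p, [] => evalModule q p.1 p.2
  | p, p' :: l => (evalModule q p.1 p.2).tensor (tensorList q p' l)

/-- The action of the generator `x` of the augmented TD-algebra via `φ_s`:
`x ↦ α(s e₀⁺ + ε s⁻¹ e₁⁻k₁)`, `α = −q⁻¹(q−q⁻¹)²`. -/
def LModule.tx (M : LModule) (q s ε : ℂ) : Module.End ℂ M.V :=
  (-q⁻¹ * (q - q⁻¹) ^ 2) • (s • M.e0p + (ε * s⁻¹) • (M.e1m * M.k1))

/-- The action of the generator `y` via `φ_s`: `y ↦ ε* s e₀⁻k₀ + s⁻¹ e₁⁺`. -/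
def LModule.ty (M : LModule) (s ε' : ℂ) : Module.End ℂ M.V :=
  (ε' * s) • (M.e0m * M.k0) + s⁻¹ • M.e1p

/-- The action of the generator `k` via `φ_s`: `k ↦ s k₀`. -/
def LModule.tk (M : LModule) (s : ℂ) : Module.End ℂ M.V := s • M.k0

/-- The weight space `U_i`: the eigenspace of `k` with eigenvalue `s q^{2i−d}`. -/
def LModule.wt (M : LModule) (q s : ℂ) (d i : ℕ) : Submodule ℂ M.V :=
  LinearMap.ker (M.tk s - (s * q ^ (2 * (i : ℤ) - (d : ℤ))) • 1)

/-- Property `(D)₀`: `k` acts diagonalizably with `V = ⊕_{i=0}^d U_i`. -/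
def D0 (q s : ℂ) (M : LModule) (d : ℕ) : Prop :=
  (⨆ i : Fin (d + 1), M.wt q s d (i : ℕ)) = ⊤

/-- Property `(D)₁`: the highest weight space is 1-dimensional. -/
def D1 (q s : ℂ) (M : LModule) (d : ℕ) : Prop :=
  Module.finrank ℂ ↥(M.wt q s d 0) = 1

/-- The sequence `σ` of eigenvalues of `y^i x^i` on the highest weight space. -/
def HasSigma (q s ε ε' : ℂ) (M : LModule) (d : ℕ) (σ : ℕ → ℂ) : Prop :=
  σ 0 = 1 ∧ ∀ i : ℕ, ∀ v ∈ M.wt q s d 0, (M.ty s ε' ^ i * M.tx q s ε ^ i) v = σ i • v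

/-- The Drinfel'd polynomial, as a function of `λ`:
`P_V(λ) = Q⁻¹ Σ_{i=0}^d σ_i Π_{j=i+1}^d (q^j−q^{−j})²(ε s⁻²q^{2(d−j)} + ε* s²q^{−2(d−j)} − λ)`,
`Q = (−1)^d Π_{j=1}^d (q^j−q^{−j})²`. -/
def Pfun (q s ε ε' : ℂ) (d : ℕ) (σ : ℕ → ℂ) : ℂ → ℂ := fun lam =>
  ((-1 : ℂ) ^ d * ∏ j ∈ Finset.range d, (q ^ (j + 1) - (q⁻¹) ^ (j + 1)) ^ 2)⁻¹ *
    ∑ i ∈ Finset.range (d + 1), σ i *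
      ∏ j ∈ Finset.Icc (i + 1) d,
        ((q ^ j - (q⁻¹) ^ j) ^ 2 *
          (ε * (s⁻¹) ^ 2 * q ^ (2 * (d - j)) + ε' * s ^ 2 * (q⁻¹) ^ (2 * (d - j)) - lam))

end

/-- The `q`-factorial `[n]! = [1][2]⋯[n]`. -/
noncomputable def qfact (q : ℂ) (n : ℕ) : ℂ := ∏ j ∈ Finset.range n, qnum q (j + 1)

/-- The `q`-binomial coefficient `[ℓ]!/([ℓ−i]![i]!)`. -/
noncomputable def qbinom (q : ℂ) (ℓ i : ℕ) : ℂ := qfact q ℓ / (qfact q (ℓ - i) * qfact q i)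

/-- The rescaled dual basis `g_i = q^{−i(ℓ−i+1)} binom_q(ℓ,i) f_i`, where `f_i` is the
basis of `Hom(V(ℓ,a),ℂ)` dual to the standard basis (and `g_i = 0` for `i > ℓ`). -/
noncomputable def dualG (q : ℂ) (ℓ : ℕ) (i : ℕ) : Module.Dual ℂ (Fin (ℓ + 1) → ℂ) :=
  if h : i < ℓ + 1 then
    (q ^ (-((i * (ℓ - i + 1) : ℕ) : ℤ)) * qbinom q ℓ i) •
      (LinearMap.proj (⟨i, h⟩ : Fin (ℓ + 1)) : (Fin (ℓ + 1) → ℂ) →ₗ[ℂ] ℂ)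
  else 0

/-!
If `fᵢ` is the basis dual to the standard basis, the transpose of an operator with matrix `T`
has matrix `Tᵀ` in the `fᵢ`. After rescaling to `gᵢ = cᵢ fᵢ`, the coordinate map `gᵢ ↦ vᵢ`
intertwines the transpose of `T` with the operator of matrix `S` exactly when
`c_j T_{ji} = c_i S_{ij}`. For the six generators of `V(ℓ,a)` and `V(ℓ,a⁻¹)` this reduces to the
single recursion `c_{i+1} [i+1] = c_i [ℓ-i] q^{2i-ℓ}`, which `cᵢ = q^{-i(ℓ-i+1)} binom_q(ℓ,i)`
satisfies because `binom_q(ℓ,i+1) [i+1] = binom_q(ℓ,i) [ℓ-i]`. The action on the `gᵢ` is then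
read off from the action of `V(ℓ,a⁻¹)` on its standard basis.
-/

open Module Matrix

theorem Module.Basis.equivFun_self_eq_single {R M ι : Type*} [CommSemiring R] [AddCommMonoid M]
    [Module R M] [Finite ι] [DecidableEq ι] (b : Basis ι R M) (i : ι) :
    b.equivFun (b i) = Pi.single i 1 := by
  simp [Basis.equivFun_apply, Finsupp.single_eq_pi_single]

section ScaledDualBasis

variable {K ι : Type*} [Field K] [Fintype ι] [DecidableEq ι] (c : ι → K) (hc : ∀ i, c i ≠ 0)

noncomputable def Pi.scaledDualBasis : Basis ι K (Dual K (ι → K)) :=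
  (Pi.basisFun K ι).dualBasis.isUnitSMul fun i => (hc i).isUnit

theorem Pi.scaledDualBasis_apply (i : ι) :
    Pi.scaledDualBasis c hc i = c i • LinearMap.proj i := by
  rw [Pi.scaledDualBasis, Basis.isUnitSMul_apply]
  congr 1
  ext v
  simp

theorem Pi.scaledDualBasis_equivFun_apply (f : Dual K (ι → K)) (i : ι) :
    (Pi.scaledDualBasis c hc).equivFun f i = (c i)⁻¹ * f (Pi.single i 1) := by
  simp [Pi.scaledDualBasis, Basis.repr_isUnitSMul, Units.smul_def]

theorem Matrix.toLin'_comp_scaledDualBasis_equivFun {S T : Matrix ι ι K}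
    (h : ∀ i j, c j * T j i = c i * S i j) :
    toLin' S ∘ₗ (Pi.scaledDualBasis c hc).equivFun.toLinearMap =
      (Pi.scaledDualBasis c hc).equivFun.toLinearMap ∘ₗ (toLin' T).dualMap := by
  refine (Pi.scaledDualBasis c hc).ext fun j => funext fun k => ?_
  rw [LinearMap.comp_apply, LinearMap.comp_apply, LinearEquiv.coe_coe,
    Basis.equivFun_self_eq_single, Pi.scaledDualBasis_equivFun_apply, LinearMap.dualMap_apply,
    Pi.scaledDualBasis_apply]
  simp only [toLin'_apply, mulVec_single_one, col_apply, LinearMap.smul_apply,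
    LinearMap.proj_apply, smul_eq_mul]
  rw [h k j]
  field_simp [hc k]

theorem Matrix.toLin'_comp_scaledDualBasis_equivFun_of_mul {S M N : Matrix ι ι K}
    (h : ∀ i j, c j * (M * N) j i = c i * S i j) :
    toLin' S ∘ₗ (Pi.scaledDualBasis c hc).equivFun.toLinearMap =
      (Pi.scaledDualBasis c hc).equivFun.toLinearMap ∘ₗ (toLin' M * toLin' N).dualMap := by
  rw [Module.End.mul_eq_comp, ← toLin'_mul]
  exact toLin'_comp_scaledDualBasis_equivFun c hc h

theorem Matrix.toLin'_diagonal_comp_scaledDualBasis_equivFun (d : ι → K) :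
    toLin' (diagonal d) ∘ₗ (Pi.scaledDualBasis c hc).equivFun.toLinearMap =
      (Pi.scaledDualBasis c hc).equivFun.toLinearMap ∘ₗ (toLin' (diagonal d)).dualMap :=
  toLin'_comp_scaledDualBasis_equivFun c hc fun i j => by
    rcases eq_or_ne i j with rfl | h
    · rfl
    · simp [h, h.symm]

end ScaledDualBasis

theorem LinearEquiv.apply_eq_symm_of_comp_eq {R M N : Type*} [Semiring R] [AddCommMonoid M]
    [AddCommMonoid N] [Module R M] [Module R N] {ψ : M ≃ₗ[R] N} {A : Module.End R M}
    {S : Module.End R N} (h : S ∘ₗ ψ.toLinearMap = ψ.toLinearMap ∘ₗ A) (x : M) :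
    A x = ψ.symm (S (ψ x)) :=
  ψ.eq_symm_apply.2 (LinearMap.congr_fun h x).symm

section StdVec

variable {K : Type*} [CommSemiring K] {n : ℕ}

/-- Zero when `n ≤ i`, matching the convention of `dualG`. -/
def stdVec (n i : ℕ) : Fin n → K := fun k => if (k : ℕ) = i then 1 else 0

theorem stdVec_of_lt {i : ℕ} (h : i < n) : (stdVec n i : Fin n → K) = Pi.single ⟨i, h⟩ 1 := by
  ext k
  simp [stdVec, Pi.single_apply, Fin.ext_iff]

theorem stdVec_of_le {i : ℕ} (h : n ≤ i) : (stdVec n i : Fin n → K) = 0 := by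
  ext k
  simp [stdVec, show (k : ℕ) ≠ i by omega]

theorem toLin'_raise_stdVec (w : ℕ → K) (i : ℕ) :
    toLin' (Matrix.of fun k j : Fin n => if (k : ℕ) = j + 1 then w k else 0) (stdVec n i) =
      w (i + 1) • stdVec n (i + 1) := by
  rcases lt_or_ge i n with hi | hi
  · ext k
    rw [stdVec_of_lt hi, toLin'_apply, mulVec_single_one]
    by_cases hk : (k : ℕ) = i + 1 <;> simp [stdVec, hk]
  · rw [stdVec_of_le hi, stdVec_of_le (by omega), map_zero, smul_zero]

theorem toLin'_lower_stdVec_succ (w : ℕ → K) (hw : w (n - 1) = 0) (i : ℕ) :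
    toLin' (Matrix.of fun k j : Fin n => if (j : ℕ) = k + 1 then w k else 0) (stdVec n (i + 1)) =
      w i • stdVec n i := by
  rcases lt_or_ge (i + 1) n with hi | hi
  · ext k
    rw [stdVec_of_lt hi, toLin'_apply, mulVec_single_one]
    by_cases hk : (k : ℕ) = i <;> simp [stdVec, hk, eq_comm (a := i)]
  · rw [stdVec_of_le hi, map_zero]
    rcases lt_or_ge i n with hi' | hi'
    · rw [show i = n - 1 by omega, hw, zero_smul]
    · rw [stdVec_of_le hi', smul_zero]

theorem toLin'_lower_stdVec_zero (w : ℕ → K) :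
    toLin' (Matrix.of fun k j : Fin n => if (j : ℕ) = k + 1 then w k else 0) (stdVec n 0) = 0 := by
  rcases Nat.eq_zero_or_pos n with rfl | hn
  · exact Subsingleton.elim _ _
  · ext k
    rw [stdVec_of_lt hn, toLin'_apply, mulVec_single_one]
    simp

theorem toLin'_diagonal_stdVec (w : ℕ → K) (i : ℕ) :
    toLin' (Matrix.diagonal fun k : Fin n => w k) (stdVec n i) = w i • stdVec n i := by
  ext k
  by_cases hk : (k : ℕ) = i <;> simp [toLin'_apply, mulVec_diagonal, stdVec, hk]

end StdVec

section QNumbers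

variable {q : ℂ}

theorem sub_inv_ne_zero_of_notRootOfUnity (hq : q ≠ 0) (hqru : NotRootOfUnity q) :
    q - q⁻¹ ≠ 0 := by
  refine fun h => hqru 2 two_ne_zero ?_
  rw [sq]
  nth_rw 1 [sub_eq_zero.mp h]
  exact inv_mul_cancel₀ hq

theorem qnum_ne_zero (hq : q ≠ 0) (hqru : NotRootOfUnity q) {n : ℕ} (hn : n ≠ 0) :
    qnum q n ≠ 0 := by
  refine div_ne_zero (fun h => hqru (2 * n) (by omega) ?_)
    (sub_inv_ne_zero_of_notRootOfUnity hq hqru)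
  rw [pow_mul', sq]
  nth_rw 1 [sub_eq_zero.mp h]
  rw [inv_pow, inv_mul_cancel₀ (pow_ne_zero n hq)]

theorem qfact_succ (n : ℕ) : qfact q (n + 1) = qfact q n * qnum q (n + 1) :=
  Finset.prod_range_succ _ _

theorem qfact_ne_zero (hq : q ≠ 0) (hqru : NotRootOfUnity q) (n : ℕ) : qfact q n ≠ 0 :=
  Finset.prod_ne_zero_iff.mpr fun j _ => qnum_ne_zero hq hqru j.succ_ne_zero

theorem qbinom_ne_zero (hq : q ≠ 0) (hqru : NotRootOfUnity q) (ℓ i : ℕ) : qbinom q ℓ i ≠ 0 :=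
  div_ne_zero (qfact_ne_zero hq hqru _)
    (mul_ne_zero (qfact_ne_zero hq hqru _) (qfact_ne_zero hq hqru _))

theorem qbinom_succ_mul_qnum (hq : q ≠ 0) (hqru : NotRootOfUnity q) {ℓ i : ℕ} (hi : i < ℓ) :
    qbinom q ℓ (i + 1) * qnum q (i + 1) = qbinom q ℓ i * qnum q (ℓ - i) := by
  obtain ⟨m, rfl⟩ : ∃ m, ℓ = i + 1 + m := ⟨ℓ - (i + 1), by omega⟩
  have hfm := qfact_ne_zero hq hqru m
  have hfi := qfact_ne_zero hq hqru i
  have hqm := qnum_ne_zero hq hqru m.succ_ne_zero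
  have hqi := qnum_ne_zero hq hqru i.succ_ne_zero
  simp only [qbinom, qfact_succ, show i + 1 + m - (i + 1) = m by omega,
    show i + 1 + m - i = m + 1 by omega]
  field_simp

end QNumbers

noncomputable def dualScale (q : ℂ) (ℓ i : ℕ) : ℂ :=
  q ^ (-((i * (ℓ - i + 1) : ℕ) : ℤ)) * qbinom q ℓ i

section DualEvalModule

variable {q : ℂ} (hq : q ≠ 0) (hqru : NotRootOfUnity q) (ℓ : ℕ)

include hq hqru in
theorem dualScale_ne_zero (i : ℕ) : dualScale q ℓ i ≠ 0 :=
  mul_ne_zero (zpow_ne_zero _ hq) (qbinom_ne_zero hq hqru ℓ i)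

include hq hqru in
theorem dualScale_succ_mul_qnum {i : ℕ} (hi : i < ℓ) :
    dualScale q ℓ (i + 1) * qnum q (i + 1) =
      dualScale q ℓ i * qnum q (ℓ - i) * q ^ (2 * (i : ℤ) - ℓ) := by
  obtain ⟨m, rfl⟩ : ∃ m, ℓ = i + 1 + m := ⟨ℓ - (i + 1), by omega⟩
  have hpow : q ^ (-(((i + 1) * (i + 1 + m - (i + 1) + 1) : ℕ) : ℤ)) =
      q ^ (-((i * (i + 1 + m - i + 1) : ℕ) : ℤ)) * q ^ (2 * (i : ℤ) - ((i + 1 + m : ℕ) : ℤ)) := by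
    rw [← zpow_add₀ hq, show i + 1 + m - (i + 1) = m by omega,
      show i + 1 + m - i = m + 1 by omega]
    congr 1
    push_cast
    ring
  rw [dualScale, dualScale, hpow, mul_assoc, mul_assoc, qbinom_succ_mul_qnum hq hqru hi]
  ring

noncomputable def dualEvalBasis : Basis (Fin (ℓ + 1)) ℂ (Dual ℂ (Fin (ℓ + 1) → ℂ)) :=
  Pi.scaledDualBasis (fun i : Fin (ℓ + 1) => dualScale q ℓ i) fun i => dualScale_ne_zero hq hqru ℓ i

theorem dualEvalBasis_apply (i : Fin (ℓ + 1)) : dualEvalBasis hq hqru ℓ i = dualG q ℓ i := by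
  rw [dualEvalBasis, Pi.scaledDualBasis_apply, dualG, dif_pos i.isLt]
  rfl

noncomputable def dualEvalEquiv : Dual ℂ (Fin (ℓ + 1) → ℂ) ≃ₗ[ℂ] (Fin (ℓ + 1) → ℂ) :=
  (dualEvalBasis hq hqru ℓ).equivFun

theorem dualEvalEquiv_dualG (i : ℕ) :
    dualEvalEquiv hq hqru ℓ (dualG q ℓ i) = stdVec (ℓ + 1) i := by
  rcases lt_or_ge i (ℓ + 1) with hi | hi
  · rw [stdVec_of_lt hi, ← dualEvalBasis_apply hq hqru ℓ ⟨i, hi⟩, dualEvalEquiv, dualEvalBasis,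
      Basis.equivFun_self_eq_single]
  · rw [dualG, dif_neg (by omega), map_zero, stdVec_of_le hi]

theorem dualEvalEquiv_symm_stdVec (i : ℕ) :
    (dualEvalEquiv hq hqru ℓ).symm (stdVec (ℓ + 1) i) = dualG q ℓ i :=
  (LinearEquiv.symm_apply_eq _).2 (dualEvalEquiv_dualG hq hqru ℓ i).symm

variable {hq hqru ℓ} {A : Module.End ℂ (Dual ℂ (Fin (ℓ + 1) → ℂ))}
  {S : Module.End ℂ (Fin (ℓ + 1) → ℂ)}

theorem apply_dualG_eq_smul_of_comp_eq
    (h : S ∘ₗ (dualEvalEquiv hq hqru ℓ).toLinearMap = (dualEvalEquiv hq hqru ℓ).toLinearMap ∘ₗ A)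
    {i j : ℕ} {r : ℂ} (hS : S (stdVec (ℓ + 1) i) = r • stdVec (ℓ + 1) j) :
    A (dualG q ℓ i) = r • dualG q ℓ j := by
  rw [LinearEquiv.apply_eq_symm_of_comp_eq h, dualEvalEquiv_dualG, hS, map_smul,
    dualEvalEquiv_symm_stdVec]

theorem apply_dualG_eq_zero_of_comp_eq
    (h : S ∘ₗ (dualEvalEquiv hq hqru ℓ).toLinearMap = (dualEvalEquiv hq hqru ℓ).toLinearMap ∘ₗ A)
    {i : ℕ} (hS : S (stdVec (ℓ + 1) i) = 0) : A (dualG q ℓ i) = 0 := by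
  rw [LinearEquiv.apply_eq_symm_of_comp_eq h, dualEvalEquiv_dualG, hS, map_zero]

end DualEvalModule

section EvalModuleStdVec

variable (q : ℂ) (ℓ : ℕ) (b : ℂ)

theorem evalModule_e0p_stdVec (i : ℕ) :
    (evalModule q ℓ b).e0p (stdVec (ℓ + 1) i) =
      (b * q * qnum q (i + 1)) • stdVec (ℓ + 1) (i + 1) :=
  toLin'_raise_stdVec (fun k => b * q * qnum q k) i

theorem evalModule_e0m_stdVec_succ (i : ℕ) :
    (evalModule q ℓ b).e0m (stdVec (ℓ + 1) (i + 1)) =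
      (b⁻¹ * q⁻¹ * qnum q (ℓ - i)) • stdVec (ℓ + 1) i :=
  toLin'_lower_stdVec_succ (fun k => b⁻¹ * q⁻¹ * qnum q (ℓ - k)) (by simp [qnum]) i

theorem evalModule_e0m_stdVec_zero : (evalModule q ℓ b).e0m (stdVec (ℓ + 1) 0) = 0 :=
  toLin'_lower_stdVec_zero fun k => b⁻¹ * q⁻¹ * qnum q (ℓ - k)

theorem evalModule_e1p_stdVec_succ (i : ℕ) :
    (evalModule q ℓ b).e1p (stdVec (ℓ + 1) (i + 1)) = qnum q (ℓ - i) • stdVec (ℓ + 1) i :=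
  toLin'_lower_stdVec_succ (fun k => qnum q (ℓ - k)) (by simp [qnum]) i

theorem evalModule_e1p_stdVec_zero : (evalModule q ℓ b).e1p (stdVec (ℓ + 1) 0) = 0 :=
  toLin'_lower_stdVec_zero fun k => qnum q (ℓ - k)

theorem evalModule_e1m_stdVec (i : ℕ) :
    (evalModule q ℓ b).e1m (stdVec (ℓ + 1) i) = qnum q (i + 1) • stdVec (ℓ + 1) (i + 1) :=
  toLin'_raise_stdVec (fun k => qnum q k) i

theorem evalModule_k0_stdVec (i : ℕ) :
    (evalModule q ℓ b).k0 (stdVec (ℓ + 1) i) = q ^ (2 * (i : ℤ) - ℓ) • stdVec (ℓ + 1) i :=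
  toLin'_diagonal_stdVec (fun k : ℕ => q ^ (2 * (k : ℤ) - ℓ)) i

theorem evalModule_k1_stdVec (i : ℕ) :
    (evalModule q ℓ b).k1 (stdVec (ℓ + 1) i) = q ^ ((ℓ : ℤ) - 2 * i) • stdVec (ℓ + 1) i :=
  toLin'_diagonal_stdVec (fun k : ℕ => q ^ ((ℓ : ℤ) - 2 * k)) i

end EvalModuleStdVec

section Intertwining

variable {q : ℂ} (hq : q ≠ 0) (hqru : NotRootOfUnity q) (ℓ : ℕ) (a : ℂ)

theorem evalModule_inv_e0p_comp_dualEvalEquiv :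
    (evalModule q ℓ a⁻¹).e0p ∘ₗ (dualEvalEquiv hq hqru ℓ).toLinearMap =
      (dualEvalEquiv hq hqru ℓ).toLinearMap ∘ₗ
        ((evalModule q ℓ a).e0m * (evalModule q ℓ a).k0).dualMap := by
  refine toLin'_comp_scaledDualBasis_equivFun_of_mul _ _ fun i j => ?_
  simp only [mul_diagonal, of_apply]
  split_ifs with h
  · have hj : (j : ℕ) < ℓ := by omega
    have hpow : q⁻¹ * q ^ (2 * (((j : ℕ) + 1 : ℕ) : ℤ) - ℓ) = q ^ (2 * ((j : ℕ) : ℤ) - ℓ) * q := by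
      rw [← _root_.zpow_neg_one, ← zpow_add₀ hq, ← zpow_add_one₀ hq]
      congr 1
      push_cast
      ring
    rw [h]
    linear_combination (a⁻¹ * dualScale q ℓ j * qnum q (ℓ - j)) * hpow -
      (a⁻¹ * q) * dualScale_succ_mul_qnum hq hqru ℓ hj
  · simp

theorem evalModule_inv_e0m_comp_dualEvalEquiv :
    (evalModule q ℓ a⁻¹).e0m ∘ₗ (dualEvalEquiv hq hqru ℓ).toLinearMap =
      (dualEvalEquiv hq hqru ℓ).toLinearMap ∘ₗ
        ((evalModule q ℓ a).k1 * (evalModule q ℓ a).e0p).dualMap := by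
  refine toLin'_comp_scaledDualBasis_equivFun_of_mul _ _ fun i j => ?_
  simp only [diagonal_mul, of_apply]
  split_ifs with h
  · have hi : (i : ℕ) < ℓ := by omega
    have hpow : q ^ ((ℓ : ℤ) - 2 * (((i : ℕ) + 1 : ℕ) : ℤ)) * q ^ (2 * ((i : ℕ) : ℤ) - ℓ) * q =
        q⁻¹ := by
      rw [← zpow_add₀ hq, ← zpow_add_one₀ hq, ← _root_.zpow_neg_one]
      congr 1
      push_cast
      ring
    rw [h, inv_inv]
    linear_combination (a * q * q ^ ((ℓ : ℤ) - 2 * (((i : ℕ) + 1 : ℕ) : ℤ))) *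
      dualScale_succ_mul_qnum hq hqru ℓ hi + (a * dualScale q ℓ i * qnum q (ℓ - i)) * hpow
  · simp

theorem evalModule_inv_e1p_comp_dualEvalEquiv :
    (evalModule q ℓ a⁻¹).e1p ∘ₗ (dualEvalEquiv hq hqru ℓ).toLinearMap =
      (dualEvalEquiv hq hqru ℓ).toLinearMap ∘ₗ
        ((evalModule q ℓ a).e1m * (evalModule q ℓ a).k1).dualMap := by
  refine toLin'_comp_scaledDualBasis_equivFun_of_mul _ _ fun i j => ?_
  simp only [mul_diagonal, of_apply]
  split_ifs with h
  · have hi : (i : ℕ) < ℓ := by omega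
    have hpow : q ^ ((ℓ : ℤ) - 2 * ((i : ℕ) : ℤ)) * q ^ (2 * ((i : ℕ) : ℤ) - ℓ) = 1 := by
      rw [← zpow_add₀ hq, sub_add_sub_cancel', sub_self, zpow_zero]
    rw [h]
    linear_combination q ^ ((ℓ : ℤ) - 2 * ((i : ℕ) : ℤ)) * dualScale_succ_mul_qnum hq hqru ℓ hi +
      (dualScale q ℓ i * qnum q (ℓ - i)) * hpow
  · simp

theorem evalModule_inv_e1m_comp_dualEvalEquiv :
    (evalModule q ℓ a⁻¹).e1m ∘ₗ (dualEvalEquiv hq hqru ℓ).toLinearMap =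
      (dualEvalEquiv hq hqru ℓ).toLinearMap ∘ₗ
        ((evalModule q ℓ a).k0 * (evalModule q ℓ a).e1p).dualMap := by
  refine toLin'_comp_scaledDualBasis_equivFun_of_mul _ _ fun i j => ?_
  simp only [diagonal_mul, of_apply]
  split_ifs with h
  · rw [h]
    linear_combination -dualScale_succ_mul_qnum hq hqru ℓ (show (j : ℕ) < ℓ by omega)
  · simp

theorem evalModule_inv_k0_comp_dualEvalEquiv :
    (evalModule q ℓ a⁻¹).k0 ∘ₗ (dualEvalEquiv hq hqru ℓ).toLinearMap =
      (dualEvalEquiv hq hqru ℓ).toLinearMap ∘ₗ (evalModule q ℓ a).k0.dualMap :=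
  toLin'_diagonal_comp_scaledDualBasis_equivFun _ _ _

theorem evalModule_inv_k1_comp_dualEvalEquiv :
    (evalModule q ℓ a⁻¹).k1 ∘ₗ (dualEvalEquiv hq hqru ℓ).toLinearMap =
      (dualEvalEquiv hq hqru ℓ).toLinearMap ∘ₗ (evalModule q ℓ a).k1.dualMap :=
  toLin'_diagonal_comp_scaledDualBasis_equivFun _ _ _

end Intertwining

theorem dual_eval_module_general (q : ℂ) (hq : q ≠ 0) (hqru : NotRootOfUnity q)
    (ℓ : ℕ) (a : ℂ)
    (A0p A0m A1p A1m AK0 AK1 : Module.End ℂ (Module.Dual ℂ ((evalModule q ℓ a).V)))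
    (hA0p : A0p = LinearMap.dualMap ((evalModule q ℓ a).e0m * (evalModule q ℓ a).k0))
    (hA0m : A0m = LinearMap.dualMap ((evalModule q ℓ a).k1 * (evalModule q ℓ a).e0p))
    (hA1p : A1p = LinearMap.dualMap ((evalModule q ℓ a).e1m * (evalModule q ℓ a).k1))
    (hA1m : A1m = LinearMap.dualMap ((evalModule q ℓ a).k0 * (evalModule q ℓ a).e1p))
    (hAK0 : AK0 = LinearMap.dualMap ((evalModule q ℓ a).k0))
    (hAK1 : AK1 = LinearMap.dualMap ((evalModule q ℓ a).k1)) :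
    (∃ ψ : Module.Dual ℂ ((evalModule q ℓ a).V) ≃ₗ[ℂ] (evalModule q ℓ a⁻¹).V,
      (evalModule q ℓ a⁻¹).e0p ∘ₗ ψ.toLinearMap = ψ.toLinearMap ∘ₗ A0p ∧
      (evalModule q ℓ a⁻¹).e0m ∘ₗ ψ.toLinearMap = ψ.toLinearMap ∘ₗ A0m ∧
      (evalModule q ℓ a⁻¹).e1p ∘ₗ ψ.toLinearMap = ψ.toLinearMap ∘ₗ A1p ∧
      (evalModule q ℓ a⁻¹).e1m ∘ₗ ψ.toLinearMap = ψ.toLinearMap ∘ₗ A1m ∧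
      (evalModule q ℓ a⁻¹).k0 ∘ₗ ψ.toLinearMap = ψ.toLinearMap ∘ₗ AK0 ∧
      (evalModule q ℓ a⁻¹).k1 ∘ₗ ψ.toLinearMap = ψ.toLinearMap ∘ₗ AK1) ∧
    (∀ i : ℕ, A0p (dualG q ℓ i) = (a⁻¹ * q * qnum q (i + 1)) • dualG q ℓ (i + 1)) ∧
    (∀ i : ℕ, A0m (dualG q ℓ (i + 1)) = (a * q⁻¹ * qnum q (ℓ - i)) • dualG q ℓ i) ∧
    A0m (dualG q ℓ 0) = 0 ∧
    (∀ i : ℕ, A1p (dualG q ℓ (i + 1)) = qnum q (ℓ - i) • dualG q ℓ i) ∧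
    A1p (dualG q ℓ 0) = 0 ∧
    (∀ i : ℕ, A1m (dualG q ℓ i) = qnum q (i + 1) • dualG q ℓ (i + 1)) ∧
    (∀ i : ℕ, AK0 (dualG q ℓ i) = q ^ (2 * (i : ℤ) - (ℓ : ℤ)) • dualG q ℓ i) ∧
    (∀ i : ℕ, AK1 (dualG q ℓ i) = q ^ ((ℓ : ℤ) - 2 * (i : ℤ)) • dualG q ℓ i) := by
  subst hA0p hA0m hA1p hA1m hAK0 hAK1
  have h0p := evalModule_inv_e0p_comp_dualEvalEquiv hq hqru ℓ a
  have h0m := evalModule_inv_e0m_comp_dualEvalEquiv hq hqru ℓ a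
  have h1p := evalModule_inv_e1p_comp_dualEvalEquiv hq hqru ℓ a
  have h1m := evalModule_inv_e1m_comp_dualEvalEquiv hq hqru ℓ a
  have hk0 := evalModule_inv_k0_comp_dualEvalEquiv hq hqru ℓ a
  have hk1 := evalModule_inv_k1_comp_dualEvalEquiv hq hqru ℓ a
  refine ⟨⟨_, h0p, h0m, h1p, h1m, hk0, hk1⟩,
    fun i => apply_dualG_eq_smul_of_comp_eq h0p (evalModule_e0p_stdVec q ℓ a⁻¹ i),
    fun i => apply_dualG_eq_smul_of_comp_eq h0m
      ((evalModule_e0m_stdVec_succ q ℓ a⁻¹ i).trans (by rw [inv_inv]; rfl)),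
    apply_dualG_eq_zero_of_comp_eq h0m (evalModule_e0m_stdVec_zero q ℓ a⁻¹),
    fun i => apply_dualG_eq_smul_of_comp_eq h1p (evalModule_e1p_stdVec_succ q ℓ a⁻¹ i),
    apply_dualG_eq_zero_of_comp_eq h1p (evalModule_e1p_stdVec_zero q ℓ a⁻¹),
    fun i => apply_dualG_eq_smul_of_comp_eq h1m (evalModule_e1m_stdVec q ℓ a⁻¹ i),
    fun i => apply_dualG_eq_smul_of_comp_eq hk0 (evalModule_k0_stdVec q ℓ a⁻¹ i),
    fun i => apply_dualG_eq_smul_of_comp_eq hk1 (evalModule_k1_stdVec q ℓ a⁻¹ i)⟩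

/-- the dual of the evaluation module `V(ℓ,a)`, with `L`-action twisted by
the antiautomorphism `τ` (so that `e_i⁺` acts by the transpose of `e_i⁻k_i`, `e_i⁻` by
the transpose of `k_i⁻¹e_i⁺`, `k_i^{±1}` by its own transpose), is isomorphic to
`V(ℓ,a⁻¹)`; explicitly the `g_i` form a standard basis with parameter `a⁻¹`. -/
theorem dual_eval_module (q : ℂ) (hq : q ≠ 0) (hqru : NotRootOfUnity q)
    (ℓ : ℕ) (hℓ : 1 ≤ ℓ) (a : ℂ) (ha : a ≠ 0)
    (A0p A0m A1p A1m AK0 AK1 : Module.End ℂ (Module.Dual ℂ ((evalModule q ℓ a).V)))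
    (hA0p : A0p = LinearMap.dualMap ((evalModule q ℓ a).e0m * (evalModule q ℓ a).k0))
    (hA0m : A0m = LinearMap.dualMap ((evalModule q ℓ a).k1 * (evalModule q ℓ a).e0p))
    (hA1p : A1p = LinearMap.dualMap ((evalModule q ℓ a).e1m * (evalModule q ℓ a).k1))
    (hA1m : A1m = LinearMap.dualMap ((evalModule q ℓ a).k0 * (evalModule q ℓ a).e1p))
    (hAK0 : AK0 = LinearMap.dualMap ((evalModule q ℓ a).k0))
    (hAK1 : AK1 = LinearMap.dualMap ((evalModule q ℓ a).k1)) :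
    (∃ ψ : Module.Dual ℂ ((evalModule q ℓ a).V) ≃ₗ[ℂ] (evalModule q ℓ a⁻¹).V,
      (evalModule q ℓ a⁻¹).e0p ∘ₗ ψ.toLinearMap = ψ.toLinearMap ∘ₗ A0p ∧
      (evalModule q ℓ a⁻¹).e0m ∘ₗ ψ.toLinearMap = ψ.toLinearMap ∘ₗ A0m ∧
      (evalModule q ℓ a⁻¹).e1p ∘ₗ ψ.toLinearMap = ψ.toLinearMap ∘ₗ A1p ∧
      (evalModule q ℓ a⁻¹).e1m ∘ₗ ψ.toLinearMap = ψ.toLinearMap ∘ₗ A1m ∧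
      (evalModule q ℓ a⁻¹).k0 ∘ₗ ψ.toLinearMap = ψ.toLinearMap ∘ₗ AK0 ∧
      (evalModule q ℓ a⁻¹).k1 ∘ₗ ψ.toLinearMap = ψ.toLinearMap ∘ₗ AK1) ∧
    (∀ i : ℕ, A0p (dualG q ℓ i) = (a⁻¹ * q * qnum q (i + 1)) • dualG q ℓ (i + 1)) ∧
    (∀ i : ℕ, A0m (dualG q ℓ (i + 1)) = (a * q⁻¹ * qnum q (ℓ - i)) • dualG q ℓ i) ∧
    A0m (dualG q ℓ 0) = 0 ∧
    (∀ i : ℕ, A1p (dualG q ℓ (i + 1)) = qnum q (ℓ - i) • dualG q ℓ i) ∧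
    A1p (dualG q ℓ 0) = 0 ∧
    (∀ i : ℕ, A1m (dualG q ℓ i) = qnum q (i + 1) • dualG q ℓ (i + 1)) ∧
    (∀ i : ℕ, AK0 (dualG q ℓ i) = q ^ (2 * (i : ℤ) - (ℓ : ℤ)) • dualG q ℓ i) ∧
    (∀ i : ℕ, AK1 (dualG q ℓ i) = q ^ ((ℓ : ℤ) - 2 * (i : ℤ)) • dualG q ℓ i) :=
  dual_eval_module_general q hq hqru ℓ a A0p A0m A1p A1m AK0 AK1 hA0p hA0m hA1p hA1m hAK0 hAK1
end
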